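/- Fix σ ∈ (0,2), Δx > 0 and integers I, K ≥ 2. Then for every prescription of real values b at all boundary nodes (the nodes of Γ_d ∪ Γ_h), there exists a unique grid function W such that L_σ^D W_i^k = 0 at every interior node and W agrees with b at every boundary node. -/
import Mathlib

lemma alg11 (σ Δx : ℝ) (hΔx : 0 < Δx) (k : ℕ) (hk : 0 < k) (a b c d w : ℝ)
    (h : ((k : ℝ) * Δx) ^ (1 - σ) * (a + b + c + d - 4 * w) / Δx ^ 2
        + (1 - σ) * ((k : ℝ) * Δx) ^ (-σ) * (c - w) / Δx = 0) :
    a + b + d + (1 + (1 - σ) / (k : ℝ)) * c = (4 + (1 - σ) / (k : ℝ)) * w := by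
  have hk' : (0:ℝ) < (k : ℝ) := by exact_mod_cast hk
  have hy : (0:ℝ) < (k : ℝ) * Δx := by positivity
  have hΔ : Δx ≠ 0 := ne_of_gt hΔx
  have hrp : ((k : ℝ) * Δx) ^ (1 - σ) = ((k : ℝ) * Δx) * ((k : ℝ) * Δx) ^ (-σ) := by
    rw [sub_eq_add_neg, Real.rpow_add hy, Real.rpow_one]
  have hQ : (0:ℝ) < ((k : ℝ) * Δx) ^ (-σ) := Real.rpow_pos_of_pos hy _
  have h4 : (((k:ℝ)*(a+b+c+d-4*w) + (1-σ)*(c-w)) * ((((k:ℝ)*Δx)^(-σ)) * Δx)) = 0 := by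
    have e : (((k:ℝ)*(a+b+c+d-4*w) + (1-σ)*(c-w)) * ((((k:ℝ)*Δx)^(-σ)) * Δx))
        = ((((k:ℝ)*Δx) * (((k:ℝ)*Δx)^(-σ))) * (a+b+c+d-4*w) / Δx ^ 2
            + (1-σ) * (((k:ℝ)*Δx)^(-σ)) * (c-w) / Δx) * Δx ^ 2 := by
      field_simp
    rw [e, ← hrp, h, zero_mul]
  have key : (k:ℝ)*(a+b+c+d-4*w) + (1-σ)*(c-w) = 0 :=
    (mul_eq_zero.1 h4).resolve_right (by positivity)
  have hkne : (k:ℝ) ≠ 0 := ne_of_gt hk'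
  field_simp
  linear_combination key

lemma sign11 (σ : ℝ) (hσ2 : σ < 2) (I K : ℕ) (W : ℕ → ℕ → ℝ)
    (hint : ∀ i k, 0 < i → i < I → 0 < k → k < K →
      W (i+1) k + W (i-1) k + W i (k-1) + (1 + (1 - σ) / (k:ℝ)) * W i (k+1)
        = (4 + (1 - σ) / (k:ℝ)) * W i k)
    (hb : ∀ i k, i ≤ I → k ≤ K → (k = 0 ∨ i = 0 ∨ i = I ∨ k = K) → W i k = 0) :
    ∀ i ≤ I, ∀ k ≤ K, W i k ≤ 0 := by
  classical
  set s : Finset (ℕ × ℕ) := Finset.range (I+1) ×ˢ Finset.range (K+1) with hs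
  have hne : s.Nonempty := by
    refine ⟨(0,0), ?_⟩
    simp [hs]
  obtain ⟨p, hp, hmax⟩ := s.exists_max_image (fun q => W q.1 q.2) hne
  set M := W p.1 p.2 with hM
  have hub : ∀ i ≤ I, ∀ k ≤ K, W i k ≤ M := by
    intro i hi k hk
    exact hmax (i, k) (by simp [hs]; omega)
  have key : ∀ i, ∀ k, i ≤ I → k ≤ K → W i k = M → M ≤ 0 := by
    intro i
    induction i using Nat.strong_induction_on with
    | _ i ih =>
      intro k hi hk heq
      by_cases hbnd : k = 0 ∨ i = 0 ∨ i = I ∨ k = K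
      · have h0 := hb i k hi hk hbnd
        linarith [heq ▸ h0]
      · push_neg at hbnd
        obtain ⟨hk0, hi0, hiI, hkK⟩ := hbnd
        have hi' : 0 < i := Nat.pos_of_ne_zero hi0
        have hiI' : i < I := lt_of_le_of_ne hi hiI
        have hk' : 0 < k := Nat.pos_of_ne_zero hk0
        have hkK' : k < K := lt_of_le_of_ne hk hkK
        have heqn := hint i k hi' hiI' hk' hkK'
        have hkR : (1:ℝ) ≤ (k:ℝ) := by exact_mod_cast hk'
        have h1c : (0:ℝ) < 1 + (1 - σ) / (k:ℝ) := by
          have : (-1:ℝ) < (1 - σ) / (k:ℝ) := by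
            rw [lt_div_iff₀ (by linarith)]
            nlinarith
          linarith
        have n1 : W (i+1) k ≤ M := hub (i+1) (by omega) k hk
        have n2 : W (i-1) k ≤ M := hub (i-1) (by omega) k hk
        have n3 : W i (k-1) ≤ M := hub i hi (k-1) (by omega)
        have n4 : W i (k+1) ≤ M := hub i hi (k+1) (by omega)
        have hWM : W i k = M := heq
        have hge : M ≤ W (i-1) k := by nlinarith
        have := ih (i-1) (by omega) k (by omega) hk (le_antisymm n2 hge)
        exact this
  have hM0 : M ≤ 0 := by
    have hp1 : p.1 ≤ I ∧ p.2 ≤ K := by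
      simp [hs] at hp
      omega
    exact key p.1 p.2 hp1.1 hp1.2 rfl
  intro i hi k hk
  exact le_trans (hub i hi k hk) hM0

noncomputable def expr11 (σ Δx : ℝ) (k : ℕ) (n1 n2 n3 n4 w : ℝ) : ℝ :=
  ((k : ℝ) * Δx) ^ (1 - σ) * (n1 + n2 + n3 + n4 - 4 * w) / Δx ^ 2
    + (1 - σ) * ((k : ℝ) * Δx) ^ (-σ) * (n3 - w) / Δx

lemma expr11_add (σ Δx : ℝ) (k : ℕ) (n1 n2 n3 n4 w m1 m2 m3 m4 v : ℝ) :
    expr11 σ Δx k (n1 + m1) (n2 + m2) (n3 + m3) (n4 + m4) (w + v)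
      = expr11 σ Δx k n1 n2 n3 n4 w + expr11 σ Δx k m1 m2 m3 m4 v := by
  unfold expr11; ring

lemma expr11_smul (σ Δx : ℝ) (k : ℕ) (c n1 n2 n3 n4 w : ℝ) :
    expr11 σ Δx k (c * n1) (c * n2) (c * n3) (c * n4) (c * w)
      = c * expr11 σ Δx k n1 n2 n3 n4 w := by
  unfold expr11; ring

noncomputable def opA11 (σ Δx : ℝ) (I K : ℕ) :
    ((Fin (I+1) × Fin (K+1)) → ℝ) →ₗ[ℝ] ((Fin (I+1) × Fin (K+1)) → ℝ) where
  toFun W p :=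
    if h : 0 < (p.1 : ℕ) ∧ (p.1 : ℕ) < I ∧ 0 < (p.2 : ℕ) ∧ (p.2 : ℕ) < K then
      expr11 σ Δx (p.2 : ℕ)
        (W (⟨(p.1:ℕ)+1, by omega⟩, p.2)) (W (⟨(p.1:ℕ)-1, by omega⟩, p.2))
        (W (p.1, ⟨(p.2:ℕ)+1, by omega⟩)) (W (p.1, ⟨(p.2:ℕ)-1, by omega⟩)) (W p)
    else W p
  map_add' u v := by
    funext p
    by_cases h : 0 < (p.1:ℕ) ∧ (p.1:ℕ) < I ∧ 0 < (p.2:ℕ) ∧ (p.2:ℕ) < K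
    · simp only [dif_pos h, Pi.add_apply]
      exact expr11_add σ Δx _ _ _ _ _ _ _ _ _ _ _
    · simp only [dif_neg h, Pi.add_apply]
  map_smul' c u := by
    funext p
    dsimp only [RingHom.id_apply]
    by_cases h : 0 < (p.1:ℕ) ∧ (p.1:ℕ) < I ∧ 0 < (p.2:ℕ) ∧ (p.2:ℕ) < K
    · simp only [dif_pos h, Pi.smul_apply, smul_eq_mul]
      exact expr11_smul σ Δx _ _ _ _ _ _ _
    · simp only [dif_neg h, Pi.smul_apply, smul_eq_mul]

lemma opA11_interior (σ Δx : ℝ) (I K : ℕ) (W : (Fin (I+1) × Fin (K+1)) → ℝ) (i k : ℕ)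
    (hi : i < I + 1) (hk : k < K + 1) (h : 0 < i ∧ i < I ∧ 0 < k ∧ k < K) :
    opA11 σ Δx I K W (⟨i, hi⟩, ⟨k, hk⟩) =
      expr11 σ Δx k
        (W (⟨i+1, by omega⟩, ⟨k, hk⟩)) (W (⟨i-1, by omega⟩, ⟨k, hk⟩))
        (W (⟨i, hi⟩, ⟨k+1, by omega⟩)) (W (⟨i, hi⟩, ⟨k-1, by omega⟩)) (W (⟨i, hi⟩, ⟨k, hk⟩)) := by
  simp only [opA11, LinearMap.coe_mk, AddHom.coe_mk]
  rw [dif_pos h]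

lemma opA11_boundary (σ Δx : ℝ) (I K : ℕ) (W : (Fin (I+1) × Fin (K+1)) → ℝ)
    (p : Fin (I+1) × Fin (K+1))
    (h : ¬(0 < (p.1:ℕ) ∧ (p.1:ℕ) < I ∧ 0 < (p.2:ℕ) ∧ (p.2:ℕ) < K)) :
    opA11 σ Δx I K W p = W p := by
  simp only [opA11, LinearMap.coe_mk, AddHom.coe_mk]
  rw [dif_neg h]

lemma uniq11 (σ : ℝ) (hσ2 : σ < 2) (Δx : ℝ) (hΔx : 0 < Δx) (I K : ℕ) (b : ℕ → ℕ → ℝ)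
    (W W' : ℕ → ℕ → ℝ)
    (hWi : ∀ i k, 0 < i → i < I → 0 < k → k < K →
        ((k : ℝ) * Δx) ^ (1 - σ) *
            (W (i+1) k + W (i-1) k + W i (k+1) + W i (k-1) - 4 * W i k) / Δx ^ 2
          + (1 - σ) * ((k : ℝ) * Δx) ^ (-σ) * (W i (k+1) - W i k) / Δx = 0)
    (hWb : ∀ i k, i ≤ I → k ≤ K → (k = 0 ∨ i = 0 ∨ i = I ∨ k = K) → W i k = b i k)
    (hWi' : ∀ i k, 0 < i → i < I → 0 < k → k < K →
        ((k : ℝ) * Δx) ^ (1 - σ) *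
            (W' (i+1) k + W' (i-1) k + W' i (k+1) + W' i (k-1) - 4 * W' i k) / Δx ^ 2
          + (1 - σ) * ((k : ℝ) * Δx) ^ (-σ) * (W' i (k+1) - W' i k) / Δx = 0)
    (hWb' : ∀ i k, i ≤ I → k ≤ K → (k = 0 ∨ i = 0 ∨ i = I ∨ k = K) → W' i k = b i k) :
    ∀ i ≤ I, ∀ k ≤ K, W' i k = W i k := by
  set D : ℕ → ℕ → ℝ := fun i k => W' i k - W i k with hD
  have hDint : ∀ i k, 0 < i → i < I → 0 < k → k < K →
      D (i+1) k + D (i-1) k + D i (k-1) + (1 + (1 - σ) / (k:ℝ)) * D i (k+1)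
        = (4 + (1 - σ) / (k:ℝ)) * D i k := by
    intro i k h1 h2 h3 h4
    have a1 := alg11 σ Δx hΔx k h3 _ _ _ _ _ (hWi i k h1 h2 h3 h4)
    have a2 := alg11 σ Δx hΔx k h3 _ _ _ _ _ (hWi' i k h1 h2 h3 h4)
    simp only [hD]
    linear_combination a2 - a1
  have hDb : ∀ i k, i ≤ I → k ≤ K → (k = 0 ∨ i = 0 ∨ i = I ∨ k = K) → D i k = 0 := by
    intro i k h1 h2 h3
    simp only [hD, hWb i k h1 h2 h3, hWb' i k h1 h2 h3, sub_self]
  have s1 := sign11 σ hσ2 I K D hDint hDb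
  have s2 := sign11 σ hσ2 I K (fun i k => -(D i k))
    (by
      intro i k h1 h2 h3 h4
      have := hDint i k h1 h2 h3 h4
      linear_combination -this)
    (by
      intro i k h1 h2 h3
      rw [hDb i k h1 h2 h3, neg_zero])
  intro i hi k hk
  have t1 := s1 i hi k hk
  have t2 := s2 i hi k hk
  have : D i k = 0 := le_antisymm t1 (by linarith)
  simpa [hD, sub_eq_zero] using this

theorem stmt11 (σ : ℝ) (hσ : σ ∈ Set.Ioo (0:ℝ) 2) (Δx : ℝ) (hΔx : 0 < Δx)
    (I K : ℕ) (hI : 2 ≤ I) (hK : 2 ≤ K) (b : ℕ → ℕ → ℝ) :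
    ∃ W : ℕ → ℕ → ℝ,
      ((∀ i k, 0 < i → i < I → 0 < k → k < K →
          ((k : ℝ) * Δx) ^ (1 - σ) *
              (W (i+1) k + W (i-1) k + W i (k+1) + W i (k-1) - 4 * W i k) / Δx ^ 2
            + (1 - σ) * ((k : ℝ) * Δx) ^ (-σ) * (W i (k+1) - W i k) / Δx = 0)
        ∧ (∀ i k, i ≤ I → k ≤ K → (k = 0 ∨ i = 0 ∨ i = I ∨ k = K) → W i k = b i k))
      ∧ ∀ W' : ℕ → ℕ → ℝ,
          ((∀ i k, 0 < i → i < I → 0 < k → k < K →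
              ((k : ℝ) * Δx) ^ (1 - σ) *
                  (W' (i+1) k + W' (i-1) k + W' i (k+1) + W' i (k-1) - 4 * W' i k) / Δx ^ 2
                + (1 - σ) * ((k : ℝ) * Δx) ^ (-σ) * (W' i (k+1) - W' i k) / Δx = 0)
            ∧ (∀ i k, i ≤ I → k ≤ K → (k = 0 ∨ i = 0 ∨ i = I ∨ k = K) → W' i k = b i k))
          → ∀ i ≤ I, ∀ k ≤ K, W' i k = W i k := by
  classical
  obtain ⟨hσ0, hσ2⟩ := hσ
  -- injectivity of opA11
  have hinj : Function.Injective (opA11 σ Δx I K) := by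
    rw [← LinearMap.ker_eq_bot, LinearMap.ker_eq_bot']
    intro W hW0
    set Wex : ℕ → ℕ → ℝ := fun i k =>
      if h : i < I + 1 ∧ k < K + 1 then W (⟨i, h.1⟩, ⟨k, h.2⟩) else 0 with hWex
    have eW : ∀ i k (h1 : i < I + 1) (h2 : k < K + 1),
        W (⟨i, h1⟩, ⟨k, h2⟩) = Wex i k := by
      intro i k h1 h2
      simp only [hWex]
      rw [dif_pos ⟨h1, h2⟩]
    have hWint : ∀ i k, 0 < i → i < I → 0 < k → k < K →
        Wex (i+1) k + Wex (i-1) k + Wex i (k-1) + (1 + (1 - σ) / (k:ℝ)) * Wex i (k+1)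
          = (4 + (1 - σ) / (k:ℝ)) * Wex i k := by
      intro i k h1 h2 h3 h4
      have hi' : i < I + 1 := by omega
      have hk' : k < K + 1 := by omega
      have h0 : opA11 σ Δx I K W (⟨i, hi'⟩, ⟨k, hk'⟩) = 0 := by
        rw [hW0]; rfl
      rw [opA11_interior σ Δx I K W i k hi' hk' ⟨h1, h2, h3, h4⟩] at h0
      rw [eW, eW, eW, eW, eW] at h0
      exact alg11 σ Δx hΔx k h3 _ _ _ _ _ h0
    have hWbnd : ∀ i k, i ≤ I → k ≤ K → (k = 0 ∨ i = 0 ∨ i = I ∨ k = K) → Wex i k = 0 := by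
      intro i k h1 h2 h3
      have hi' : i < I + 1 := by omega
      have hk' : k < K + 1 := by omega
      rw [← eW i k hi' hk']
      have h0 : opA11 σ Δx I K W (⟨i, hi'⟩, ⟨k, hk'⟩) = 0 := by
        rw [hW0]; rfl
      rwa [opA11_boundary σ Δx I K W (⟨i, hi'⟩, ⟨k, hk'⟩) (by simp only; omega)] at h0
    have s1 := sign11 σ hσ2 I K Wex hWint hWbnd
    have s2 := sign11 σ hσ2 I K (fun i k => -(Wex i k))
      (by
        intro i k h1 h2 h3 h4
        have := hWint i k h1 h2 h3 h4
        linear_combination -this)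
      (by
        intro i k h1 h2 h3
        rw [hWbnd i k h1 h2 h3, neg_zero])
    funext p
    have t1 := s1 p.1 (by omega) p.2 (by omega)
    have t2 := s2 p.1 (by omega) p.2 (by omega)
    have hz : Wex p.1 p.2 = 0 := le_antisymm t1 (by linarith)
    have := eW p.1 p.2 p.1.isLt p.2.isLt
    simp only [Fin.eta] at this
    rw [Pi.zero_apply, ← hz, ← this]
  have hsurj : Function.Surjective (opA11 σ Δx I K) :=
    (LinearMap.injective_iff_surjective).1 hinj
  set f : (Fin (I+1) × Fin (K+1)) → ℝ := fun p =>
    if 0 < (p.1:ℕ) ∧ (p.1:ℕ) < I ∧ 0 < (p.2:ℕ) ∧ (p.2:ℕ) < K then 0 else b p.1 p.2 with hf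
  obtain ⟨W, hWf⟩ := hsurj f
  set Wans : ℕ → ℕ → ℝ := fun i k =>
    if h : i < I + 1 ∧ k < K + 1 then W (⟨i, h.1⟩, ⟨k, h.2⟩) else 0 with hWans
  have eW : ∀ i k (h1 : i < I + 1) (h2 : k < K + 1),
      W (⟨i, h1⟩, ⟨k, h2⟩) = Wans i k := by
    intro i k h1 h2
    simp only [hWans]
    rw [dif_pos ⟨h1, h2⟩]
  have hWint : ∀ i k, 0 < i → i < I → 0 < k → k < K →
      ((k : ℝ) * Δx) ^ (1 - σ) *
          (Wans (i+1) k + Wans (i-1) k + Wans i (k+1) + Wans i (k-1) - 4 * Wans i k) / Δx ^ 2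
        + (1 - σ) * ((k : ℝ) * Δx) ^ (-σ) * (Wans i (k+1) - Wans i k) / Δx = 0 := by
    intro i k h1 h2 h3 h4
    have hi' : i < I + 1 := by omega
    have hk' : k < K + 1 := by omega
    have h0 : opA11 σ Δx I K W (⟨i, hi'⟩, ⟨k, hk'⟩) = f (⟨i, hi'⟩, ⟨k, hk'⟩) := by
      rw [hWf]
    rw [opA11_interior σ Δx I K W i k hi' hk' ⟨h1, h2, h3, h4⟩] at h0
    rw [eW, eW, eW, eW, eW] at h0
    have hfz : f (⟨i, hi'⟩, ⟨k, hk'⟩) = 0 := by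
      rw [hf]
      exact if_pos ⟨h1, h2, h3, h4⟩
    rw [hfz] at h0
    exact h0
  have hWbnd : ∀ i k, i ≤ I → k ≤ K → (k = 0 ∨ i = 0 ∨ i = I ∨ k = K) → Wans i k = b i k := by
    intro i k h1 h2 h3
    have hi' : i < I + 1 := by omega
    have hk' : k < K + 1 := by omega
    have hnint : ¬(0 < i ∧ i < I ∧ 0 < k ∧ k < K) := by omega
    have h0 : opA11 σ Δx I K W (⟨i, hi'⟩, ⟨k, hk'⟩) = f (⟨i, hi'⟩, ⟨k, hk'⟩) := by
      rw [hWf]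
    rw [opA11_boundary σ Δx I K W (⟨i, hi'⟩, ⟨k, hk'⟩) (by simp only; omega)] at h0
    have hfb : f (⟨i, hi'⟩, ⟨k, hk'⟩) = b i k := by
      rw [hf]
      exact if_neg (by simp only; omega)
    rw [← eW i k hi' hk', h0, hfb]
  refine ⟨Wans, ⟨hWint, hWbnd⟩, ?_⟩
  intro W' hW'
  exact uniq11 σ hσ2 Δx hΔx I K b Wans W' hWint hWbnd hW'.1 hW'.2
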